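/- With h(x) = x e^{x²/2} ∫_x^∞ e^{−z²/2} dz, for all x > 0: x²/(x²+1) ≤ h(x) ≤ (x²+2)/(x²+3). -/

import Mathlib

/-! If `r(z) e^{-z²/2}` vanishes at infinity and the derivative of `-r(z) e^{-z²/2}` lies below
(resp. above) `e^{-z²/2}` on `[x, ∞)`, integrating shows that `r(x) e^{-x²/2}` is a lower
(resp. upper) bound for the Gaussian tail `∫_x^∞ e^{-z²/2} dz`. Both `r(z) = z/(z²+1)` and
`r(z) = (z²+2)/(z(z²+3))` (for `z > 0`) satisfy this, by a polynomial inequality in `z`. -/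

open Real MeasureTheory Filter Set Topology

noncomputable def h (x : ℝ) : ℝ :=
  x * Real.exp (x ^ 2 / 2) * ∫ z in Set.Ioi x, Real.exp (-z ^ 2 / 2)

section ImproperComparison

variable {g g' φ : ℝ → ℝ} {a m : ℝ}

theorem sub_le_integral_Ioi_of_hasDerivAt_of_le (hderiv : ∀ x ∈ Ici a, HasDerivAt g (g' x) x)
    (φint : IntegrableOn φ (Ioi a)) (hg : Tendsto g atTop (𝓝 m))
    (hφg : ∀ x ∈ Ioi a, g' x ≤ φ x) : m - g a ≤ ∫ x in Ioi a, φ x := by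
  refine le_of_tendsto_of_tendsto (hg.sub_const (g a))
    (intervalIntegral_tendsto_integral_Ioi a φint tendsto_id) ?_
  filter_upwards [eventually_ge_atTop a] with T haT
  refine intervalIntegral.sub_le_integral_of_hasDeriv_right_of_le haT
    (fun x hx => (hderiv x hx.1).continuousAt.continuousWithinAt)
    (fun x hx => (hderiv x hx.1.le).hasDerivWithinAt) ?_ (fun x hx => hφg x hx.1)
  exact (integrableOn_Icc_iff_integrableOn_Ioc (f := φ)).2 (φint.mono_set Ioc_subset_Ioi_self)

theorem integral_Ioi_le_sub_of_hasDerivAt_of_le (hderiv : ∀ x ∈ Ici a, HasDerivAt g (g' x) x)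
    (φint : IntegrableOn φ (Ioi a)) (hg : Tendsto g atTop (𝓝 m))
    (hφg : ∀ x ∈ Ioi a, φ x ≤ g' x) : ∫ x in Ioi a, φ x ≤ m - g a := by
  have := sub_le_integral_Ioi_of_hasDerivAt_of_le (fun x hx => (hderiv x hx).neg) φint.neg
    hg.neg fun x hx => neg_le_neg (hφg x hx)
  simp only [Pi.neg_apply, integral_neg] at this
  linarith

end ImproperComparison

lemma integrable_exp_neg_sq_div_two : Integrable fun z : ℝ => exp (-z ^ 2 / 2) := by
  convert integrable_exp_neg_mul_sq (b := 1 / 2) (by norm_num) using 3 with z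
  ring

lemma tendsto_exp_neg_sq_div_two_atTop : Tendsto (fun z : ℝ => exp (-z ^ 2 / 2)) atTop (𝓝 0) := by
  simp only [neg_div]
  exact tendsto_exp_neg_atTop_nhds_zero.comp
    ((tendsto_pow_atTop two_ne_zero).atTop_div_const two_pos)

lemma hasDerivAt_exp_neg_sq_div_two (z : ℝ) :
    HasDerivAt (fun z : ℝ => exp (-z ^ 2 / 2)) (-z * exp (-z ^ 2 / 2)) z := by
  refine ((hasDerivAt_pow 2 z).neg.div_const 2).exp.congr_deriv ?_
  simp only [Pi.neg_apply]
  ring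

lemma tendsto_mul_exp_neg_sq_div_two_atTop {r : ℝ → ℝ} (hr : ∀ᶠ z in atTop, |r z| ≤ 1) :
    Tendsto (fun z => r z * exp (-z ^ 2 / 2)) atTop (𝓝 0) := by
  refine squeeze_zero_norm' ?_ tendsto_exp_neg_sq_div_two_atTop
  filter_upwards [hr] with z hz
  rw [norm_mul, Real.norm_eq_abs, Real.norm_of_nonneg (exp_nonneg _)]
  exact mul_le_of_le_one_left (exp_nonneg _) hz

theorem le_integral_Ioi_exp_neg_sq_div_two (x : ℝ) :
    x / (x ^ 2 + 1) * exp (-x ^ 2 / 2) ≤ ∫ z in Ioi x, exp (-z ^ 2 / 2) := by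
  have hderiv : ∀ z : ℝ, HasDerivAt (fun z => -(z / (z ^ 2 + 1) * exp (-z ^ 2 / 2)))
      ((z ^ 4 + 2 * z ^ 2 - 1) / (z ^ 2 + 1) ^ 2 * exp (-z ^ 2 / 2)) z := fun z => by
    have hz : z ^ 2 + 1 ≠ 0 := by positivity
    refine (((hasDerivAt_id z).div ((hasDerivAt_pow 2 z).add_const 1) hz).mul
      (hasDerivAt_exp_neg_sq_div_two z)).neg.congr_deriv ?_
    simp only [Pi.div_apply, id]
    field_simp
    ring
  have hlim : Tendsto (fun z => -(z / (z ^ 2 + 1) * exp (-z ^ 2 / 2))) atTop (𝓝 0) := by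
    simpa using (tendsto_mul_exp_neg_sq_div_two_atTop (r := fun z => z / (z ^ 2 + 1))
      (Eventually.of_forall fun z => by
        rw [abs_div, abs_of_pos (by positivity : (0 : ℝ) < z ^ 2 + 1), div_le_one (by positivity)]
        nlinarith [sq_nonneg (|z| - 1), sq_abs z])).neg
  have := sub_le_integral_Ioi_of_hasDerivAt_of_le (a := x) (fun z _ => hderiv z)
    integrable_exp_neg_sq_div_two.integrableOn hlim fun z _ => by
      refine mul_le_of_le_one_left (exp_nonneg _) ?_
      rw [div_le_one (by positivity)]
      nlinarith
  simpa using this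

theorem integral_Ioi_exp_neg_sq_div_two_le {x : ℝ} (hx : 0 < x) :
    ∫ z in Ioi x, exp (-z ^ 2 / 2) ≤ (x ^ 2 + 2) / (x * (x ^ 2 + 3)) * exp (-x ^ 2 / 2) := by
  have hderiv : ∀ z > 0, HasDerivAt (fun z => -((z ^ 2 + 2) / (z * (z ^ 2 + 3)) * exp (-z ^ 2 / 2)))
      (((z * (z ^ 2 + 3)) ^ 2 + 6) / (z * (z ^ 2 + 3)) ^ 2 * exp (-z ^ 2 / 2)) z := fun z hz => by
    have hz' : z * (z ^ 2 + 3) ≠ 0 := by positivity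
    refine ((((hasDerivAt_pow 2 z).add_const 2).div
      ((hasDerivAt_id z).mul ((hasDerivAt_pow 2 z).add_const 3)) hz').mul
      (hasDerivAt_exp_neg_sq_div_two z)).neg.congr_deriv ?_
    simp only [Pi.mul_apply, Pi.div_apply, id]
    field_simp
    ring
  have hlim : Tendsto (fun z => -((z ^ 2 + 2) / (z * (z ^ 2 + 3)) * exp (-z ^ 2 / 2))) atTop
      (𝓝 0) := by
    simpa using (tendsto_mul_exp_neg_sq_div_two_atTop
      (r := fun z => (z ^ 2 + 2) / (z * (z ^ 2 + 3))) (by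
        filter_upwards [eventually_ge_atTop 1] with z hz
        have hz0 : 0 < z := one_pos.trans_le hz
        rw [abs_of_pos (by positivity), div_le_one (by positivity)]
        nlinarith)).neg
  have := integral_Ioi_le_sub_of_hasDerivAt_of_le (fun z hz => hderiv z (hx.trans_le hz))
    integrable_exp_neg_sq_div_two.integrableOn hlim fun z hz => by
      have hz0 : 0 < z := hx.trans hz
      refine le_mul_of_one_le_left (exp_nonneg _) ?_
      rw [le_div_iff₀ (by positivity)]
      linarith
  simpa using this

theorem stmt_15 (x : ℝ) (hx : 0 < x) :
    x ^ 2 / (x ^ 2 + 1) ≤ h x ∧ h x ≤ (x ^ 2 + 2) / (x ^ 2 + 3) := by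
  have hscale : 0 ≤ x * exp (x ^ 2 / 2) := by positivity
  have hcancel : exp (x ^ 2 / 2) * exp (-x ^ 2 / 2) = 1 := by
    rw [← exp_add, neg_div, add_neg_cancel, exp_zero]
  constructor
  · calc x ^ 2 / (x ^ 2 + 1)
        = x * exp (x ^ 2 / 2) * (x / (x ^ 2 + 1) * exp (-x ^ 2 / 2)) := by
          rw [mul_mul_mul_comm, mul_assoc x, hcancel]; ring
      _ ≤ h x := mul_le_mul_of_nonneg_left (le_integral_Ioi_exp_neg_sq_div_two x) hscale
  · calc h x
        ≤ x * exp (x ^ 2 / 2) * ((x ^ 2 + 2) / (x * (x ^ 2 + 3)) * exp (-x ^ 2 / 2)) :=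
          mul_le_mul_of_nonneg_left (integral_Ioi_exp_neg_sq_div_two_le hx) hscale
      _ = (x ^ 2 + 2) / (x ^ 2 + 3) := by
          rw [mul_mul_mul_comm, mul_assoc x, hcancel]; field_simp
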